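/- Assume f satisfies (f_reg), (f_eq), (f_0), let η ∈ (0,1), d > 1/η, and let u be a solution of the Cauchy problem with datum d on [0,R2]. Set r0 := max{r ∈ [0,R2] : u(s) > η d for all s ∈ [0,r)} and f*(s) = max_{σ∈[1,s]} f(σ). Then r0 ≥ min{ R2 , ((1-η) d p')^{1/p'} · (N / f*(d))^{1/p} }. -/

import Mathlib

open Real Set Filter Topology

noncomputable def phip (p s : ℝ) : ℝ := |s| ^ (p - 2) * s

def Freg (f : ℝ → ℝ) : Prop :=
  ContinuousOn f (Ici 0) ∧ ContDiffOn ℝ 1 f (Ioi 0)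

def Feq (f : ℝ → ℝ) : Prop :=
  f 0 = 0 ∧ f 1 = 0 ∧ (∀ s : ℝ, 0 < s → s < 1 → f s < 0) ∧ (∀ s : ℝ, 1 < s → 0 < f s)

def Fzero (p : ℝ) (f : ℝ → ℝ) : Prop :=
  ∃ c : ℝ, ∀ᶠ s in 𝓝[>] (0:ℝ), c ≤ f s / s ^ (p - 1)

noncomputable def pstar (p : ℝ) (N : ℕ) : EReal :=
  if p < (N:ℝ) then (((N:ℝ) * p / ((N:ℝ) - p) : ℝ) : EReal) else ⊤

noncomputable def fstar (f : ℝ → ℝ) (s : ℝ) : ℝ := sSup (f '' Icc 1 s)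

noncomputable def Fint (f : ℝ → ℝ) (s : ℝ) : ℝ := ∫ σ in (1:ℝ)..s, f σ

def Fsubl (p : ℝ) (f : ℝ → ℝ) : Prop :=
  ∃ M : ℝ, 0 < M ∧ ∀ ε > 0, ∀ᶠ s in atTop, f s / s ^ (p - 1) ≤ M + ε

def FsubcWith (p : ℝ) (N : ℕ) (f : ℝ → ℝ) (η : ℝ) : Prop :=
  (∀ c : ℝ, ∃ᶠ s in atTop, c < f s / s ^ (p - 1)) ∧
  0 < η ∧ η < 1 ∧
  ∃ L : ℝ, (L : EReal) < pstar p N ∧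
    ∀ᶠ s in atTop, fstar f s * s / Fint f (η * s) ≤ L

def Fsubc (p : ℝ) (N : ℕ) (f : ℝ → ℝ) : Prop := ∃ η : ℝ, FsubcWith p N f η

/-- A radial solution of the Neumann problem on `[R1,R2]`. -/
def NeumannSol (p : ℝ) (N : ℕ) (R1 R2 : ℝ) (f u : ℝ → ℝ) : Prop :=
  (∀ x ∈ Icc R1 R2, DifferentiableAt ℝ u x) ∧
  ContinuousOn (deriv u) (Icc R1 R2) ∧
  (∀ x ∈ Icc R1 R2, 0 < u x) ∧
  deriv u R1 = 0 ∧ deriv u R2 = 0 ∧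
  ContinuousOn (fun x => x ^ (N - 1) * phip p (deriv u x)) (Icc R1 R2) ∧
  ∀ x ∈ Ioc R1 R2,
    HasDerivAt (fun t => t ^ (N - 1) * phip p (deriv u t)) (-(x ^ (N - 1)) * f (u x)) x

noncomputable def fhat (f : ℝ → ℝ) (s : ℝ) : ℝ := if 0 ≤ s then f s else 0

noncomputable def Fhat (f : ℝ → ℝ) (s : ℝ) : ℝ := ∫ σ in (1:ℝ)..s, fhat f σ

/-- A solution of the Cauchy problem with datum `d`, for the nonlinearity `g`. -/
def CauchySol (p : ℝ) (N : ℕ) (R1 R2 : ℝ) (g u : ℝ → ℝ) (d : ℝ) : Prop :=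
  (∀ x ∈ Icc R1 R2, DifferentiableAt ℝ u x) ∧
  ContinuousOn (deriv u) (Icc R1 R2) ∧
  u R1 = d ∧ deriv u R1 = 0 ∧
  ContinuousOn (fun x => x ^ (N - 1) * phip p (deriv u x)) (Icc R1 R2) ∧
  ∀ x ∈ Ioc R1 R2,
    HasDerivAt (fun t => t ^ (N - 1) * phip p (deriv u t)) (-(x ^ (N - 1)) * g (u x)) x

noncomputable def rOne (R1 R2 : ℝ) (u : ℝ → ℝ) : ℝ :=
  sSup {x | x ∈ Icc R1 R2 ∧ ∀ s ∈ Ico R1 x, 0 < u s}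

noncomputable def rZero (R2 η d : ℝ) (u : ℝ → ℝ) : ℝ :=
  sSup {x | x ∈ Icc 0 R2 ∧ ∀ s ∈ Ico 0 x, η * d < u s}

noncomputable def energy (p : ℝ) (f u : ℝ → ℝ) (x : ℝ) : ℝ :=
  |deriv u x| ^ p / (p / (p - 1)) + Fhat f (u x)

def NonConstOn (R1 R2 : ℝ) (u : ℝ → ℝ) : Prop :=
  ∃ x ∈ Icc R1 R2, ∃ x' ∈ Icc R1 R2, u x ≠ u x'

def DistinctOn (R1 R2 : ℝ) (u v : ℝ → ℝ) : Prop :=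
  ∃ x ∈ Icc R1 R2, u x ≠ v x

noncomputable def nOverPstar (p : ℝ) (N : ℕ) : ℝ :=
  if p < (N:ℝ) then ((N:ℝ) - p) / p else 0

/-!
Up to the first radius `r` at which `u` drops to `η d`, we have `u > η d > 1`, so `f̂(u) = f(u) > 0`.
Hence the flux `v(t) = t^{N-1} φ_p(u'(t))` decreases from `v(0) = 0`, so `u' ≤ 0` and `u ≤ d`, which
gives `0 < f(u) ≤ f*(d)`. Integrating `v'(t) ≥ -t^{N-1} f*(d)` yields `|u'(t)|^{p-1} ≤ f*(d) t / N`,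
and integrating once more, `(1 - η) d ≤ d - u(r) ≤ (f*(d) / N)^{p'/p} r^{p'} / p'`, which is the
claimed lower bound for `r`.
-/

theorem phip_zero (p : ℝ) : phip p 0 = 0 := by simp [phip]

theorem phip_pos {p s : ℝ} (hs : 0 < s) : 0 < phip p s :=
  mul_pos (rpow_pos_of_pos (abs_pos.2 hs.ne') _) hs

theorem abs_phip {p : ℝ} (hp : p ≠ 1) (s : ℝ) : |phip p s| = |s| ^ (p - 1) := by
  rcases eq_or_ne s 0 with rfl | hs
  · rw [phip_zero, abs_zero, zero_rpow (sub_ne_zero.2 hp)]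
  · rw [phip, abs_mul, abs_of_nonneg (rpow_nonneg (abs_nonneg s) _), show p - 1 = p - 2 + 1 by ring,
      rpow_add_one (abs_ne_zero.2 hs)]

theorem monotoneOn_Icc_of_hasDerivAt_nonneg {f f' : ℝ → ℝ} {a b : ℝ}
    (hf : ContinuousOn f (Icc a b)) (hf' : ∀ x ∈ Ioo a b, HasDerivAt f (f' x) x)
    (hf'₀ : ∀ x ∈ Ioo a b, 0 ≤ f' x) : MonotoneOn f (Icc a b) :=
  monotoneOn_of_hasDerivWithinAt_nonneg (convex_Icc a b) hf
    (by simpa only [interior_Icc] using fun x hx => (hf' x hx).hasDerivWithinAt)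
    (by simpa only [interior_Icc] using hf'₀)

theorem antitoneOn_Icc_of_hasDerivAt_nonpos {f f' : ℝ → ℝ} {a b : ℝ}
    (hf : ContinuousOn f (Icc a b)) (hf' : ∀ x ∈ Ioo a b, HasDerivAt f (f' x) x)
    (hf'₀ : ∀ x ∈ Ioo a b, f' x ≤ 0) : AntitoneOn f (Icc a b) :=
  antitoneOn_of_hasDerivWithinAt_nonpos (convex_Icc a b) hf
    (by simpa only [interior_Icc] using fun x hx => (hf' x hx).hasDerivWithinAt)
    (by simpa only [interior_Icc] using hf'₀)

theorem ContinuousOn.exists_le_forall_lt {u : ℝ → ℝ} {a s c : ℝ} (hu : ContinuousOn u (Icc a s))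
    (has : a ≤ s) (ha : c < u a) (hs : u s ≤ c) :
    ∃ r ∈ Ioc a s, u r ≤ c ∧ ∀ t ∈ Ico a r, c < u t := by
  set B := Icc a s ∩ u ⁻¹' Iic c
  have hB : IsCompact B := isCompact_Icc.of_isClosed_subset
    (hu.preimage_isClosed_of_isClosed isClosed_Icc isClosed_Iic) inter_subset_left
  have hr : sInf B ∈ B := hB.sInf_mem ⟨s, ⟨has, le_rfl⟩, hs⟩
  refine ⟨sInf B, ⟨hr.1.1.lt_of_ne ?_, hr.1.2⟩, hr.2, fun t ht => ?_⟩
  · intro h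
    exact (hr.2 : u (sInf B) ≤ c).not_gt (h ▸ ha)
  · by_contra! h
    exact ht.2.not_ge (csInf_le hB.bddBelow ⟨⟨ht.1, ht.2.le.trans hr.1.2⟩, h⟩)

theorem sub_le_rpow_of_neg_le_deriv {u u' : ℝ → ℝ} {a q r : ℝ} (ha : 0 < a) (hq : 0 < q)
    (hr : 0 ≤ r) (hu : ContinuousOn u (Icc 0 r)) (hu' : ∀ t ∈ Ioo 0 r, HasDerivAt u (u' t) t)
    (hb : ∀ t ∈ Ioo 0 r, -(a * (a * t) ^ (q - 1)) ≤ u' t) :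
    u 0 - u r ≤ (a * r) ^ q / q := by
  have hmono : MonotoneOn (fun t => u t + (a * t) ^ q / q) (Icc 0 r) := by
    refine monotoneOn_Icc_of_hasDerivAt_nonneg
      (hu.add (((continuous_const_mul a).continuousOn.rpow_const fun _ _ => Or.inr hq.le).div_const q))
      (fun t ht => (hu' t ht).add
        ((((hasDerivAt_id' t).const_mul a).rpow_const (Or.inl (by simp [ha.ne', ht.1.ne']))).div_const q))
      fun t ht => ?_
    have := hb t ht
    field_simp
    linarith
  have := hmono ⟨le_rfl, hr⟩ ⟨hr, le_rfl⟩ hr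
  simp only [mul_zero, zero_rpow hq.ne', zero_div, add_zero] at this
  linarith

theorem le_fstar {f : ℝ → ℝ} {s d : ℝ} (hf : ContinuousOn f (Icc 1 d)) (hs : s ∈ Icc 1 d) :
    f s ≤ fstar f d :=
  le_csSup (isCompact_Icc.image_of_continuousOn hf).bddAbove (mem_image_of_mem f hs)

theorem fhat_of_nonneg (f : ℝ → ℝ) {s : ℝ} (hs : 0 ≤ s) : fhat f s = f s := if_pos hs

theorem le_rZero {R2 η d T : ℝ} {u : ℝ → ℝ} (hT : T ∈ Icc 0 R2)
    (h : ∀ s ∈ Ico 0 T, η * d < u s) : T ≤ rZero R2 η d u :=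
  le_csSup ⟨R2, fun _ hx => hx.1.2⟩ ⟨hT, h⟩

noncomputable def flux (p : ℝ) (N : ℕ) (u : ℝ → ℝ) (t : ℝ) : ℝ := t ^ (N - 1) * phip p (deriv u t)

namespace CauchySol

variable {p : ℝ} {N : ℕ} {R2 d r M : ℝ} {g u : ℝ → ℝ}

section

variable {R1 : ℝ} (hu : CauchySol p N R1 R2 g u d)
include hu

theorem initial_value : u R1 = d := hu.2.2.1

theorem hasDerivAt {t : ℝ} (ht : t ∈ Icc R1 R2) : HasDerivAt u (deriv u t) t :=
  (hu.1 t ht).hasDerivAt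

theorem continuousOn : ContinuousOn u (Icc R1 R2) :=
  fun _ ht => (hu.hasDerivAt ht).continuousAt.continuousWithinAt

theorem continuousOn_flux : ContinuousOn (flux p N u) (Icc R1 R2) := hu.2.2.2.2.1

theorem hasDerivAt_flux {t : ℝ} (ht : t ∈ Ioc R1 R2) :
    HasDerivAt (flux p N u) (-(t ^ (N - 1)) * g (u t)) t :=
  hu.2.2.2.2.2 t ht

end

theorem flux_zero (hu : CauchySol p N 0 R2 g u d) : flux p N u 0 = 0 := by
  simp [flux, hu.2.2.2.1, phip_zero]

theorem flux_antitoneOn (hu : CauchySol p N 0 R2 g u d) (hr : r ≤ R2)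
    (hg : ∀ t ∈ Ioo 0 r, 0 ≤ g (u t)) : AntitoneOn (flux p N u) (Icc 0 r) :=
  antitoneOn_Icc_of_hasDerivAt_nonpos (hu.continuousOn_flux.mono (Icc_subset_Icc_right hr))
    (fun t ht => hu.hasDerivAt_flux ⟨ht.1, ht.2.le.trans hr⟩)
    fun t ht => by
      have := mul_nonneg (pow_nonneg ht.1.le (N - 1)) (hg t ht)
      linarith

theorem flux_nonpos (hu : CauchySol p N 0 R2 g u d) (hr : r ≤ R2)
    (hg : ∀ t ∈ Ioo 0 r, 0 ≤ g (u t)) {t : ℝ} (ht : t ∈ Icc 0 r) : flux p N u t ≤ 0 :=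
  hu.flux_zero ▸ hu.flux_antitoneOn hr hg ⟨le_rfl, ht.1.trans ht.2⟩ ht ht.1

theorem le_datum (hu : CauchySol p N 0 R2 g u d) (hr : r ≤ R2)
    (hg : ∀ t ∈ Ioo 0 r, 0 ≤ g (u t)) {t : ℝ} (ht : t ∈ Icc 0 r) : u t ≤ d := by
  have hanti : AntitoneOn u (Icc 0 r) :=
    antitoneOn_Icc_of_hasDerivAt_nonpos (hu.continuousOn.mono (Icc_subset_Icc_right hr))
      (fun t ht => hu.hasDerivAt ⟨ht.1.le, ht.2.le.trans hr⟩) fun t ht => by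
        by_contra! hpos
        have := hu.flux_nonpos hr hg (Ioo_subset_Icc_self ht)
        exact this.not_gt (mul_pos (pow_pos ht.1 _) (phip_pos hpos))
  exact hu.initial_value ▸ hanti ⟨le_rfl, ht.1.trans ht.2⟩ ht ht.1

theorem neg_le_flux (hu : CauchySol p N 0 R2 g u d) (hN : N ≠ 0) (hr : r ≤ R2)
    (hg : ∀ t ∈ Ioo 0 r, g (u t) ≤ M) {t : ℝ} (ht : t ∈ Icc 0 r) :
    -(M * t ^ N / N) ≤ flux p N u t := by
  have hmono : MonotoneOn (fun t => flux p N u t + M * t ^ N / N) (Icc 0 r) := by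
    refine monotoneOn_Icc_of_hasDerivAt_nonneg
      ((hu.continuousOn_flux.mono (Icc_subset_Icc_right hr)).add (by fun_prop))
      (fun t ht => (hu.hasDerivAt_flux ⟨ht.1, ht.2.le.trans hr⟩).add
        (((hasDerivAt_pow N t).const_mul M).div_const N)) fun t ht => ?_
    have := mul_le_mul_of_nonneg_left (hg t ht) (pow_nonneg ht.1.le (N - 1))
    field_simp
    linarith
  have := hmono ⟨le_rfl, ht.1.trans ht.2⟩ ht ht.1
  simp only [hu.flux_zero, zero_pow hN, mul_zero, zero_div, add_zero] at this
  linarith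

theorem abs_deriv_rpow_le (hu : CauchySol p N 0 R2 g u d) (hp : p ≠ 1) (hN : N ≠ 0)
    (hr : r ≤ R2) (hg₀ : ∀ t ∈ Ioo 0 r, 0 ≤ g (u t)) (hgM : ∀ t ∈ Ioo 0 r, g (u t) ≤ M)
    {t : ℝ} (ht : t ∈ Ioo 0 r) : |deriv u t| ^ (p - 1) ≤ M / N * t := by
  have hflux : t ^ (N - 1) * |deriv u t| ^ (p - 1) = -flux p N u t := by
    rw [← abs_phip hp, ← abs_of_nonpos (hu.flux_nonpos hr hg₀ (Ioo_subset_Icc_self ht)), flux,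
      abs_mul, abs_of_pos (pow_pos ht.1 _)]
  have hpow : t ^ N = t ^ (N - 1) * t := by
    rw [← pow_succ, Nat.sub_add_cancel (Nat.one_le_iff_ne_zero.2 hN)]
  refine le_of_mul_le_mul_left ?_ (pow_pos ht.1 (N - 1))
  calc t ^ (N - 1) * |deriv u t| ^ (p - 1) ≤ M * t ^ N / N := by
        linarith [hu.neg_le_flux hN hr hgM (Ioo_subset_Icc_self ht)]
    _ = t ^ (N - 1) * (M / N * t) := by rw [hpow]; ring

theorem datum_sub_le {q a : ℝ} (hu : CauchySol p N 0 R2 g u d) (hpq : p.HolderConjugate q)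
    (hN : N ≠ 0) (hr₀ : 0 ≤ r) (hr : r ≤ R2) (ha : 0 < a)
    (hg₀ : ∀ t ∈ Ioo 0 r, 0 ≤ g (u t)) (hgM : ∀ t ∈ Ioo 0 r, g (u t) ≤ N * a ^ p) :
    d - u r ≤ (a * r) ^ q / q := by
  refine hu.initial_value ▸ sub_le_rpow_of_neg_le_deriv ha hpq.symm.pos hr₀
    (hu.continuousOn.mono (Icc_subset_Icc_right hr))
    (fun t ht => hu.hasDerivAt ⟨ht.1.le, ht.2.le.trans hr⟩) fun t ht => neg_le_of_abs_le ?_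
  have ht₀ : 0 < t := ht.1
  have hexp : (q - 1) * (p - 1) = 1 := by linear_combination hpq.mul_eq_add
  rw [← rpow_le_rpow_iff (abs_nonneg _) (by positivity) hpq.sub_one_pos]
  calc |deriv u t| ^ (p - 1) ≤ N * a ^ p / N * t := hu.abs_deriv_rpow_le hpq.lt.ne' hN hr hg₀ hgM ht
    _ = (a * (a * t) ^ (q - 1)) ^ (p - 1) := by
      rw [mul_rpow ha.le (by positivity), ← rpow_mul (by positivity), hexp, rpow_one,
        rpow_sub_one ha.ne']
      field_simp [hN]

theorem rpow_mul_rpow_le {q : ℝ} (hu : CauchySol p N 0 R2 g u d) (hpq : p.HolderConjugate q)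
    (hN : N ≠ 0) (hr₀ : 0 ≤ r) (hr : r ≤ R2) (hM : 0 < M)
    (hg₀ : ∀ t ∈ Ioo 0 r, 0 ≤ g (u t)) (hgM : ∀ t ∈ Ioo 0 r, g (u t) ≤ M) :
    ((d - u r) * q) ^ (1 / q) * ((N : ℝ) / M) ^ (1 / p) ≤ r := by
  have hq : 0 < q := hpq.symm.pos
  have hF : 0 < M / N := div_pos hM (by positivity)
  set a := (M / N) ^ (1 / p)
  have ha : 0 < a := rpow_pos_of_pos hF _
  have hNa : N * a ^ p = M := by
    rw [← rpow_mul hF.le, one_div_mul_cancel hpq.pos.ne', rpow_one, mul_div_cancel₀ _ (by positivity)]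
  have key := hu.datum_sub_le hpq hN hr₀ hr ha hg₀ (hNa ▸ hgM)
  have hud : 0 ≤ d - u r := sub_nonneg.2 (hu.le_datum hr hg₀ ⟨hr₀, le_rfl⟩)
  rw [← inv_div M, inv_rpow hF.le, ← div_eq_mul_inv, div_le_iff₀ ha, one_div,
    rpow_inv_le_iff_of_pos (by positivity) (by positivity) hq, ← le_div_iff₀ hq, mul_comm r]
  exact key

end CauchySol

theorem stmt13_general (p : ℝ) (hp : 1 < p) (N : ℕ) (hN : 1 ≤ N)
    (R2 : ℝ) (hR2 : 0 < R2)
    (f : ℝ → ℝ) (hreg : Freg f) (heq : Feq f)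
    (η d : ℝ) (hη0 : 0 < η) (hη1 : η < 1) (hd : 1 / η < d)
    (u : ℝ → ℝ) (hu : CauchySol p N 0 R2 (fhat f) u d) :
    min R2 (((1 - η) * d * (p / (p - 1))) ^ (1 / (p / (p - 1))) *
      ((N : ℝ) / fstar f d) ^ (1 / p)) ≤ rZero R2 η d u := by
  set q := p / (p - 1)
  have hpq : p.HolderConjugate q := (holderConjugate_iff_eq_conjExponent hp).2 rfl
  obtain ⟨-, -, -, hfpos⟩ := heq
  have hηd : 1 < η * d := by rwa [div_lt_iff₀ hη0, mul_comm] at hd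
  have hd₁ : 1 < d := by nlinarith
  have hf : ContinuousOn f (Icc 1 d) := hreg.1.mono fun _ hx => zero_le_one.trans hx.1
  have hfd : 0 < fstar f d := (hfpos d hd₁).trans_le (le_fstar hf ⟨hd₁.le, le_rfl⟩)
  refine le_rZero ⟨le_min hR2.le (by positivity), min_le_left _ _⟩ fun s hs => ?_
  by_contra! hus
  have hsR2 : s ≤ R2 := hs.2.le.trans (min_le_left _ _)
  obtain ⟨r, hr, hur, hlt⟩ := (hu.continuousOn.mono (Icc_subset_Icc_right hsR2)).exists_le_forall_lt
    hs.1 (by rw [hu.initial_value]; nlinarith) hus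
  have hrR2 : r ≤ R2 := hr.2.trans hsR2
  have hu₁ : ∀ t ∈ Ioo 0 r, 1 < u t := fun t ht => hηd.trans (hlt t ⟨ht.1.le, ht.2⟩)
  have hg₀ : ∀ t ∈ Ioo 0 r, 0 ≤ fhat f (u t) := fun t ht => by
    rw [fhat_of_nonneg f (zero_le_one.trans (hu₁ t ht).le)]
    exact (hfpos _ (hu₁ t ht)).le
  have hgM : ∀ t ∈ Ioo 0 r, fhat f (u t) ≤ fstar f d := fun t ht => by
    rw [fhat_of_nonneg f (zero_le_one.trans (hu₁ t ht).le)]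
    exact le_fstar hf ⟨(hu₁ t ht).le, hu.le_datum hrR2 hg₀ (Ioo_subset_Icc_self ht)⟩
  have hbound := hu.rpow_mul_rpow_le hpq (by omega) hr.1.le hrR2 hfd hg₀ hgM
  refine (hs.2.trans_le ((min_le_right _ _).trans (le_trans ?_ hbound))).not_ge hr.2
  gcongr
  linarith

theorem stmt13 (p : ℝ) (hp : 1 < p) (N : ℕ) (hN : 1 ≤ N)
    (R2 : ℝ) (hR2 : 0 < R2)
    (f : ℝ → ℝ) (hreg : Freg f) (heq : Feq f) (h0 : Fzero p f)
    (η d : ℝ) (hη0 : 0 < η) (hη1 : η < 1) (hd : 1 / η < d)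
    (u : ℝ → ℝ) (hu : CauchySol p N 0 R2 (fhat f) u d) :
    min R2 (((1 - η) * d * (p / (p - 1))) ^ (1 / (p / (p - 1))) *
      ((N : ℝ) / fstar f d) ^ (1 / p)) ≤ rZero R2 η d u :=
  stmt13_general p hp N hN R2 hR2 f hreg heq η d hη0 hη1 hd u hu
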